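/- Let V be a graded vector space with an involution and a symmetric bilinear form satisfying ⟨x*, y*⟩ = ⟨x, y⟩. If m is a cyclic derivation of T̂(Σ⁻¹V*) (its structure maps m̂_n satisfy the cyclicity condition with respect to the form), then m*, defined by m*(x) = m(x*)*, is also a cyclic derivation. Consequently cyclic derivations form a skew-involutive Lie subalgebra of all derivations. -/
import Mathlib

lemma two_mul_Q (m : ℕ) (c : Fin m → ℤ) :
    2 * ∑ i, c i * ∑ j, (if i < j then c j else 0) = (∑ i, c i)^2 - ∑ i, (c i)^2 := by
  induction m with
  | zero => simp
  | succ m ih =>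
    rw [Fin.sum_univ_castSucc (f := fun i => c i * ∑ j, if i < j then c j else 0),
        Fin.sum_univ_castSucc (f := c), Fin.sum_univ_castSucc (f := fun i => (c i)^2)]
    have h1 : ∀ i : Fin m, (∑ j : Fin (m+1), if i.castSucc < j then c j else 0)
        = (∑ j : Fin m, if i < j then c j.castSucc else 0) + c (Fin.last m) := by
      intro i
      rw [Fin.sum_univ_castSucc]
      simp [Fin.castSucc_lt_castSucc_iff, Fin.castSucc_lt_last]
    have h2 : (∑ j : Fin (m+1), if Fin.last m < j then c j else 0) = 0 := by
      apply Finset.sum_eq_zero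
      intro j _
      rw [if_neg (by simp [Fin.le_last, not_lt])]
    simp only [h1, h2, mul_zero, add_zero, mul_add, Finset.sum_add_distrib, ← Finset.sum_mul]
    have := ih (fun i => c i.castSucc)
    ring_nf
    ring_nf at this
    linarith [this]

lemma arith_aux (q1 q2 S1 P1 dn dln m T : ℤ)
    (h1 : 2*q1 = S1^2 - P1)
    (h2 : 2*q2 = (S1 - dn + dln)^2 - (P1 - dn^2 + dln^2)) :
    Even (q1 + T - (dln*S1 + m + (q2 + T) + (dn*(S1 - dn + dln) + m))) := by
  refine ⟨-(dln*S1) - m, ?_⟩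
  have h3 : 2*(q1 - q2) = 2*(S1*dn - S1*dln - dn^2 + dn*dln) := by linear_combination h1 - h2
  have h4 : q1 - q2 = S1*dn - S1*dln - dn^2 + dn*dln :=
    mul_left_cancel₀ (two_ne_zero) h3
  linear_combination h4

lemma neg_one_zpow_eq (k : Type*) [Field k] (A B : ℤ) (h : Even (A - B)) :
    (-1 : k)^A = (-1 : k)^B := by
  obtain ⟨r, hr⟩ := h
  have : A = B + 2 * r := by omega
  rw [this, zpow_add₀ (by norm_num : (-1:k) ≠ 0), zpow_mul]
  norm_num



/-- The collection of structure maps `F n : V^{⊗n} → V` is cyclic with respect to the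
grading `𝒱` and the bilinear form `B`. -/
def IsCyclicCollection (k : Type*) [Field k] {V : Type*} [AddCommGroup V] [Module k V]
    (𝒱 : ℤ → Submodule k V) (B : V →ₗ[k] V →ₗ[k] k)
    (F : ∀ n : ℕ, (Fin n → V) → V) : Prop :=
  ∀ (n : ℕ) (d : Fin (n + 2) → ℤ) (x : Fin (n + 2) → V), (∀ i, x i ∈ 𝒱 (d i)) →
    B (F (n + 1) (fun i : Fin (n + 1) => x i.castSucc)) (x (Fin.last (n + 1))) =
      ((-1 : k) ^ (d (Fin.last (n + 1)) * ∑ i : Fin (n + 1), d i.castSucc) *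
          (-1 : k) ^ ((n : ℤ) + 1)) •
        B (F (n + 1) (fun i : Fin (n + 1) =>
            if h : i = 0 then x (Fin.last (n + 1)) else x ((i.pred h).castSucc.castSucc)))
          (x ((Fin.last n).castSucc))

/-- Let `V` be a graded vector space with a degree-preserving involution `τ` and a
symmetric bilinear form `B` with `⟨x*, y*⟩ = ⟨x, y⟩`.  If `m` is a cyclic derivation of
`T̂(Σ⁻¹V*)` with structure maps `F`, then `m*` (with structure maps
`F*_n(x₁,…,xₙ) = (-1)^ε (-1)^{n(n+1)/2 - 1} τ(F_n(τ x_n,…,τ x₁))`, where `ε` is the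
Koszul sign of the order reversal) is also a cyclic derivation.  Consequently cyclic
derivations form a skew-involutive Lie subalgebra of all derivations. -/
theorem stmt_15 (k : Type*) [Field k] [CharZero k]
    (V : Type*) [AddCommGroup V] [Module k V]
    (𝒱 : ℤ → Submodule k V)
    (τ : V →ₗ[k] V) (hτ2 : ∀ v, τ (τ v) = v)
    (hτdeg : ∀ i : ℤ, ∀ x ∈ 𝒱 i, τ x ∈ 𝒱 i)
    (B : V →ₗ[k] V →ₗ[k] k)
    (hsym : ∀ i j : ℤ, ∀ x ∈ 𝒱 i, ∀ y ∈ 𝒱 j, B x y = ((-1 : k) ^ (i * j)) • B y x)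
    (hBτ : ∀ x y : V, B (τ x) (τ y) = B x y)
    (F : ∀ n : ℕ, (Fin n → V) → V)
    (hF : IsCyclicCollection k 𝒱 B F)
    (Fs : ∀ n : ℕ, (Fin n → V) → V)
    (hFs : ∀ (n : ℕ) (d : Fin n → ℤ) (x : Fin n → V), (∀ i, x i ∈ 𝒱 (d i)) →
      Fs n x =
        ((-1 : k) ^ (∑ i : Fin n, d i * ∑ j : Fin n, if i < j then d j else 0) *
            (-1 : k) ^ (((n * (n + 1) / 2 : ℕ) : ℤ) - 1)) •
          τ (F n (fun i : Fin n => τ (x (Fin.rev i))))) :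
    IsCyclicCollection k 𝒱 B Fs := by
  intro n d x hx
  have hm2 : ∀ a b : V, B (τ a) b = B a (τ b) := by
    intro a b
    conv_lhs => rw [← hτ2 b]
    exact hBτ a (τ b)
  set d1 : Fin (n+1) → ℤ := fun i => d i.castSucc with hd1def
  set d2 : Fin (n+1) → ℤ := fun i => if h : i = 0 then d (Fin.last (n+1))
    else d ((i.pred h).castSucc.castSucc) with hd2def
  set x2 : Fin (n+1) → V := fun i => if h : i = 0 then x (Fin.last (n+1))
    else x ((i.pred h).castSucc.castSucc) with hx2def
  have hx1 : ∀ i : Fin (n+1), (fun i : Fin (n+1) => x i.castSucc) i ∈ 𝒱 (d1 i) := fun i => hx _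
  have hx2m : ∀ i, x2 i ∈ 𝒱 (d2 i) := by
    intro i
    by_cases h : i = 0 <;> simp [hx2def, hd2def, h, hx]
  rw [hFs (n+1) d1 (fun i => x i.castSucc) hx1, hFs (n+1) d2 x2 hx2m]
  simp only [map_smul, LinearMap.smul_apply]
  rw [hm2, hm2]
  set y : Fin (n+2) → V := Fin.snoc (fun i : Fin (n+1) => τ (x2 (Fin.rev i)))
    (τ (x ((Fin.last n).castSucc))) with hydef
  set e : Fin (n+2) → ℤ := Fin.snoc (fun i : Fin (n+1) => d2 (Fin.rev i))
    (d ((Fin.last n).castSucc)) with hedef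
  have hy : ∀ i, y i ∈ 𝒱 (e i) := by
    intro i
    refine Fin.lastCases ?_ ?_ i
    · simp only [hydef, hedef, Fin.snoc_last]
      exact hτdeg _ _ (hx _)
    · intro j
      simp only [hydef, hedef, Fin.snoc_castSucc]
      exact hτdeg _ _ (hx2m _)
  have hFy := hF n e y hy
  have ha : (fun i : Fin (n+1) => τ (x2 (Fin.rev i))) = fun i => y i.castSucc := by
    funext i; rw [hydef, Fin.snoc_castSucc]
  have hb : τ (x ((Fin.last n).castSucc)) = y (Fin.last (n+1)) := by
    rw [hydef, Fin.snoc_last]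
  have hc : (fun i : Fin (n+1) => if h : i = 0 then y (Fin.last (n+1))
      else y ((i.pred h).castSucc.castSucc)) =
      fun i : Fin (n+1) => τ ((fun j : Fin (n+1) => x j.castSucc) (Fin.rev i)) := by
    funext i
    by_cases h : i = 0
    · rw [dif_pos h, h, hydef, Fin.snoc_last]
      show τ (x ((Fin.last n).castSucc)) = τ (x ((Fin.rev 0).castSucc))
      rw [Fin.rev_zero]
    · rw [dif_neg h, hydef, Fin.snoc_castSucc]
      have hr : Fin.rev ((i.pred h).castSucc) ≠ 0 := by
        have hi : 1 ≤ i.val := Nat.one_le_iff_ne_zero.mpr (fun hh => h (Fin.ext hh))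
        simp only [ne_eq, Fin.ext_iff, Fin.val_rev, Fin.coe_castSucc, Fin.coe_pred,
          Fin.val_zero]
        omega
      rw [hx2def]
      simp only
      rw [dif_neg hr]
      have hi : 1 ≤ i.val := Nat.one_le_iff_ne_zero.mpr (fun hh => h (Fin.ext hh))
      have hi2 : i.val ≤ n := Fin.is_le i
      have heq : ((((i.pred h).castSucc.rev.pred hr).castSucc.castSucc : Fin (n+2)))
          = i.rev.castSucc := by
        simp only [Fin.ext_iff, Fin.coe_castSucc, Fin.coe_pred, Fin.val_rev]
        omega
      rw [heq]
  have hd : y ((Fin.last n).castSucc) = τ (x (Fin.last (n+1))) := by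
    rw [hydef, Fin.snoc_castSucc, Fin.rev_last, hx2def]
    simp
  rw [ha, hb, hFy, hc, hd]
  have hbeta : (fun i : Fin (n+1) => τ ((fun j : Fin (n+1) => x j.castSucc) i.rev))
      = fun i : Fin (n+1) => τ (x i.rev.castSucc) := rfl
  rw [hbeta, smul_smul, smul_smul]
  congr 1
  have hsum_rev : ∀ (f : Fin (n+1) → ℤ), ∑ i, f (Fin.rev i) = ∑ i, f i := by
    intro f
    exact Fintype.sum_bijective Fin.rev Fin.rev_bijective _ _ (fun i => rfl)
  have helast : e (Fin.last (n+1)) = d ((Fin.last n).castSucc) := by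
    rw [hedef, Fin.snoc_last]
  have hesum : ∑ i : Fin (n+1), e i.castSucc = ∑ i, d2 i := by
    simp only [hedef, Fin.snoc_castSucc]
    exact hsum_rev d2
  rw [helast, hesum]
  have hne : (-1 : k) ≠ 0 := by norm_num
  simp only [← zpow_add₀ hne]
  apply neg_one_zpow_eq
  have hq1 := two_mul_Q (n+1) d1
  have hq2 := two_mul_Q (n+1) d2
  have hd2zero : d2 0 = d (Fin.last (n+1)) := by simp [hd2def]
  have hd2succ : ∀ i : Fin n, d2 i.succ = d i.castSucc.castSucc := by
    intro i
    rw [hd2def]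
    simp only
    rw [dif_neg (Fin.succ_ne_zero i), Fin.pred_succ]
  have hS2 : ∑ i : Fin (n+1), d2 i
      = (∑ i : Fin (n+1), d1 i) - d ((Fin.last n).castSucc) + d (Fin.last (n+1)) := by
    rw [Fin.sum_univ_succ (f := d2), Fin.sum_univ_castSucc (f := d1)]
    simp only [hd2zero, hd2succ, hd1def]
    ring
  have hP2 : ∑ i : Fin (n+1), (d2 i)^2
      = (∑ i : Fin (n+1), (d1 i)^2) - (d ((Fin.last n).castSucc))^2
        + (d (Fin.last (n+1)))^2 := by
    rw [Fin.sum_univ_succ (f := fun i => (d2 i)^2),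
        Fin.sum_univ_castSucc (f := fun i => (d1 i)^2)]
    simp only [hd2zero, hd2succ, hd1def]
    ring
  rw [hS2, hP2] at hq2
  rw [hS2]
  exact arith_aux _ _ _ _ _ _ _ _ hq1 hq2
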